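/- If the κ-core of a graphon w has Lebesgue measure zero, then it is empty; moreover in this case the sequence of iterated cores stabilizes at the empty set after finitely many steps, i.e. K^n_κ(w) = ∅ for some finite n. -/

import Mathlib

open MeasureTheory Set Filter Topology ENNReal

/-- A graphon: symmetric measurable `w : [0,1]² → [0,1]` (stated on all of ℝ²). -/
def Graphon (w : ℝ → ℝ → ℝ) : Prop :=
  Measurable (Function.uncurry w) ∧ (∀ x y, w x y = w y x) ∧
    ∀ x y, w x y ∈ Set.Icc (0 : ℝ) 1

/-- Degree of `x` restricted to `K`: `d_w^K(x) = ∫_K w(x,y) dy`. -/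
noncomputable def degK (w : ℝ → ℝ → ℝ) (K : Set ℝ) (x : ℝ) : ℝ := ∫ y in K, w x y

/-- Iterated peeling sets: `coreIter w κ n = K^{n+1}_κ(w)` (so index 0 is `K¹`). -/
noncomputable def coreIter (w : ℝ → ℝ → ℝ) (κ : ℝ) : ℕ → Set ℝ
  | 0 => {x ∈ Set.Icc (0 : ℝ) 1 | κ ≤ degK w (Set.Icc 0 1) x}
  | n + 1 => {x ∈ coreIter w κ n | κ ≤ degK w (coreIter w κ n) x}

/-- The κ-core `K_κ(w) = ⋂ₙ K^n_κ(w)`. -/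
noncomputable def core (w : ℝ → ℝ → ℝ) (κ : ℝ) : Set ℝ := ⋂ n, coreIter w κ n

/-- Shell index `δ_x(w) = sup {κ : x ∈ K_κ(w)}`. -/
noncomputable def shell (w : ℝ → ℝ → ℝ) (x : ℝ) : ℝ := sSup {κ | x ∈ core w κ}

/-- Degeneracy `δ(w) = sup {κ : |K_κ(w)| > 0}`. -/
noncomputable def degen (w : ℝ → ℝ → ℝ) : ℝ := sSup {κ | 0 < volume (core w κ)}

/-- Cut-norm distance `d_□`. -/
noncomputable def cutDist (w w' : ℝ → ℝ → ℝ) : ℝ :=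
  sSup {r | ∃ S T : Set ℝ, MeasurableSet S ∧ MeasurableSet T ∧
    S ⊆ Set.Icc 0 1 ∧ T ⊆ Set.Icc 0 1 ∧
    r = |∫ x in S, ∫ y in T, (w x y - w' x y)|}

/-- A measure-preserving map of `[0,1]`. -/
def MPMap (σ : ℝ → ℝ) : Prop :=
  Measurable σ ∧ Set.MapsTo σ (Set.Icc 0 1) (Set.Icc 0 1) ∧
    ∀ A : Set ℝ, MeasurableSet A → A ⊆ Set.Icc 0 1 →
      volume (σ ⁻¹' A ∩ Set.Icc 0 1) = volume A

/-- Cut metric `δ_□(w,w') = inf_σ d_□(w^σ, w')`. -/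
noncomputable def cutMetric (w w' : ℝ → ℝ → ℝ) : ℝ :=
  sInf {r | ∃ σ : ℝ → ℝ, MPMap σ ∧ r = cutDist (fun x y => w (σ x) (σ y)) w'}

lemma degK_measurable (w : ℝ → ℝ → ℝ) (hw : Measurable (Function.uncurry w))
    (K : Set ℝ) : Measurable (degK w K) := by
  have : Measurable fun x => ∫ y, Function.uncurry w (x, y) ∂(volume.restrict K) :=
    (hw.stronglyMeasurable.integral_prod_right').measurable
  exact this

lemma coreIter_subset_Icc (w : ℝ → ℝ → ℝ) (κ : ℝ) :
    ∀ n, coreIter w κ n ⊆ Set.Icc 0 1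
  | 0 => fun x hx => hx.1
  | n + 1 => fun x hx => coreIter_subset_Icc w κ n hx.1

lemma coreIter_antitone (w : ℝ → ℝ → ℝ) (κ : ℝ) : Antitone (coreIter w κ) :=
  antitone_nat_of_succ_le fun n x hx => hx.1

lemma coreIter_measurable (w : ℝ → ℝ → ℝ) (hw : Measurable (Function.uncurry w))
    (κ : ℝ) : ∀ n, MeasurableSet (coreIter w κ n)
  | 0 => measurableSet_Icc.inter ((degK_measurable w hw _) measurableSet_Ici)
  | n + 1 => (coreIter_measurable w hw κ n).inter
      ((degK_measurable w hw _) measurableSet_Ici)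

lemma degK_le (w : ℝ → ℝ → ℝ) (hw : Graphon w) (K : Set ℝ) (hK : K ⊆ Set.Icc 0 1)
    (x : ℝ) : degK w K x ≤ (volume K).toReal := by
  have hfin : volume K ≠ ⊤ :=
    ne_top_of_le_ne_top (by simp [Real.volume_Icc]) (measure_mono hK)
  have hmeas : Measurable fun y => w x y := by
    have : (fun y => w x y) = Function.uncurry w ∘ (Prod.mk x) := rfl
    rw [this]; exact hw.1.comp measurable_prodMk_left
  have hint : IntegrableOn (fun y => w x y) K := by
    refine Integrable.mono' (g := fun _ => (1:ℝ)) ?_ hmeas.aestronglyMeasurable ?_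
    · rw [integrable_const_iff]; right
      exact ⟨by simpa [lt_top_iff_ne_top] using hfin⟩
    · filter_upwards with y
      rw [Real.norm_eq_abs, abs_of_nonneg (hw.2.2 x y).1]
      exact (hw.2.2 x y).2
  calc degK w K x ≤ ∫ _ in K, (1:ℝ) := by
        refine integral_mono hint ?_ fun y => (hw.2.2 x y).2
        rw [integrable_const_iff]; right
        exact ⟨by simpa [lt_top_iff_ne_top] using hfin⟩
    _ = (volume K).toReal := by simp [measureReal_def]

theorem stmt5 (w : ℝ → ℝ → ℝ) (hw : Graphon w) (κ : ℝ) (hκ : 0 < κ)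
    (h : volume (core w κ) = 0) :
    core w κ = ∅ ∧ ∃ n : ℕ, coreIter w κ n = ∅ := by
  have htend : Tendsto (fun n => volume (coreIter w κ n)) atTop (𝓝 (volume (core w κ))) := by
    refine tendsto_measure_iInter_atTop (fun n => (coreIter_measurable w hw.1 κ n).nullMeasurableSet)
      (coreIter_antitone w κ) ⟨0, ?_⟩
    exact ne_top_of_le_ne_top (by simp [Real.volume_Icc])
      (measure_mono (coreIter_subset_Icc w κ 0))
  rw [h] at htend
  have hev : ∃ n, volume (coreIter w κ n) < ENNReal.ofReal κ := by
    have := htend.eventually_lt_const (show (0:ℝ≥0∞) < ENNReal.ofReal κ by simpa using hκ)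
    exact this.exists
  obtain ⟨n, hn⟩ := hev
  have hemp : coreIter w κ (n + 1) = ∅ := by
    rw [Set.eq_empty_iff_forall_notMem]
    intro x hx
    have h1 : κ ≤ degK w (coreIter w κ n) x := hx.2
    have h2 : degK w (coreIter w κ n) x ≤ (volume (coreIter w κ n)).toReal :=
      degK_le w hw _ (coreIter_subset_Icc w κ n) x
    have h3 : (volume (coreIter w κ n)).toReal < κ := by
      have := ENNReal.toReal_strict_mono (by simp) hn
      rwa [ENNReal.toReal_ofReal hκ.le] at this
    linarith
  exact ⟨Set.eq_empty_iff_forall_notMem.2 fun x hx =>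
    (Set.eq_empty_iff_forall_notMem.1 hemp x) (Set.mem_iInter.1 hx (n + 1)), n + 1, hemp⟩
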